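/- Let S be a set of points in D-dimensional real space, let β_1, ..., β_D be nonnegative real coefficients and C a real constant, and suppose every point s ∈ S satisfies ∑_{j=1}^{D} β_j · s_j ≤ C. Then every point q for which there exists a point y in the convex hull of S with q_j ≤ y_j for every j ∈ {1, ..., D} also satisfies ∑_{j=1}^{D} β_j · q_j ≤ C. -/
import Mathlib


/-- Soundness of bounds-check bypassing for points in the downward closure of the
convex hull of verified-safe data points. -/
theorem downward_convexHull_sound {D : ℕ} (S : Set (Fin D → ℝ)) (β : Fin D → ℝ) (C : ℝ)
    (hβ : ∀ j, 0 ≤ β j)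
    (hS : ∀ s ∈ S, ∑ j, β j * s j ≤ C) :
    ∀ q : Fin D → ℝ, (∃ y ∈ convexHull ℝ S, ∀ j, q j ≤ y j) →
      ∑ j, β j * q j ≤ C := by
  rintro q ⟨y, hy, hqy⟩
  have hlin : IsLinearMap ℝ (fun x : Fin D → ℝ => ∑ j, β j * x j) := by
    constructor
    · intro a b; simp [mul_add, Finset.sum_add_distrib]
    · intro c a; simp [Finset.mul_sum]; exact Finset.sum_congr rfl fun i _ => by ring
  have hconv : convexHull ℝ S ⊆ {x | ∑ j, β j * x j ≤ C} :=
    convexHull_min hS (convex_halfSpace_le hlin C)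
  calc ∑ j, β j * q j ≤ ∑ j, β j * y j :=
        Finset.sum_le_sum fun j _ => mul_le_mul_of_nonneg_left (hqy j) (hβ j)
    _ ≤ C := hconv hy
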